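/- Let σ(x) = 1/(1+exp(−x)) be the logistic function. For all real numbers a, b ≤ 0, (σ(a) − σ(b))² ≥ (1/16) · exp(2·min(a,b)) · (a − b)². -/

import Mathlib

/-- The logistic (sigmoid) function `σ(x) = 1/(1+exp(−x))`. -/
noncomputable def logistic (x : ℝ) : ℝ := 1 / (1 + Real.exp (-x))

/-!
On `(-∞, 0]` the derivative `σ' = σ (1 - σ)` of the logistic function is at least `exp x / 4`,
because there `σ x ≥ exp x / 2` and `1 - σ x = σ (-x) ≥ 1/2`. By the mean value inequality,
`σ a - σ b ≥ exp b / 4 * (a - b)` for `b ≤ a ≤ 0`; squaring gives the claim.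
-/

open Real

lemma logistic_eq_sigmoid : logistic = sigmoid := by
  ext x
  rw [logistic, sigmoid_def, one_div]

namespace Real

lemma exp_div_two_le_sigmoid {x : ℝ} (hx : x ≤ 0) : exp x / 2 ≤ sigmoid x := by
  have h_one_le : 1 ≤ exp (-x) := one_le_exp (neg_nonneg.mpr hx)
  calc exp x / 2 = (2 * exp (-x))⁻¹ := by rw [mul_inv, exp_neg, inv_inv, div_eq_inv_mul]
    _ ≤ (1 + exp (-x))⁻¹ := by gcongr; linarith
    _ = sigmoid x := rfl

lemma exp_div_four_le_deriv_sigmoid {x : ℝ} (hx : x ≤ 0) :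
    exp x / 4 ≤ deriv sigmoid x := by
  have h_left : exp x / 2 ≤ sigmoid x := exp_div_two_le_sigmoid hx
  have h_right : 1 / 2 ≤ 1 - sigmoid x := by
    rw [← sigmoid_neg, one_div, ← sigmoid_zero]
    exact sigmoid_le (neg_nonneg.mpr hx)
  rw [deriv_sigmoid]
  calc exp x / 4 = exp x / 2 * (1 / 2) := by ring
    _ ≤ sigmoid x * (1 - sigmoid x) := by gcongr; exact sigmoid_nonneg x

lemma exp_div_four_mul_sub_le_sigmoid_sub {a b : ℝ} (hba : b ≤ a) (ha : a ≤ 0) :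
    exp b / 4 * (a - b) ≤ sigmoid a - sigmoid b := by
  refine (convex_Icc b 0).mul_sub_le_image_sub_of_le_deriv continuous_sigmoid.continuousOn
    differentiable_sigmoid.differentiableOn (fun x hx => ?_) b ⟨le_rfl, hba.trans ha⟩
    a ⟨hba, ha⟩ hba
  rw [interior_Icc] at hx
  calc exp b / 4 ≤ exp x / 4 := by gcongr; exact hx.1.le
    _ ≤ deriv sigmoid x := exp_div_four_le_deriv_sigmoid hx.2.le

lemma exp_two_mul_mul_sq_sub_le_sq_sigmoid_sub {a b : ℝ} (hba : b ≤ a) (ha : a ≤ 0) :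
    1 / 16 * exp (2 * b) * (a - b) ^ 2 ≤ (sigmoid a - sigmoid b) ^ 2 := by
  have h_lower := exp_div_four_mul_sub_le_sigmoid_sub hba ha
  have h_nonneg : 0 ≤ exp b / 4 * (a - b) := mul_nonneg (by positivity) (sub_nonneg.mpr hba)
  calc 1 / 16 * exp (2 * b) * (a - b) ^ 2 = (exp b / 4 * (a - b)) ^ 2 := by
        rw [two_mul, exp_add]; ring
    _ ≤ (sigmoid a - sigmoid b) ^ 2 := pow_le_pow_left₀ h_nonneg h_lower 2

end Real

/-- For `a, b ≤ 0`, `(σ(a) − σ(b))² ≥ (1/16)·exp(2·min(a,b))·(a − b)²`. -/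
theorem sq_logistic_sub_ge (a b : ℝ) (ha : a ≤ 0) (hb : b ≤ 0) :
    (1 / 16) * Real.exp (2 * min a b) * (a - b) ^ 2
      ≤ (logistic a - logistic b) ^ 2 := by
  rw [logistic_eq_sigmoid]
  rcases le_total b a with hba | hab
  · rw [min_eq_right hba]
    exact exp_two_mul_mul_sq_sub_le_sq_sigmoid_sub hba ha
  · rw [min_eq_left hab, sub_sq_comm a, sub_sq_comm (sigmoid a)]
    exact exp_two_mul_mul_sq_sub_le_sq_sigmoid_sub hab hb
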